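/- arXiv:2205.10722 — 2 statements merged into one kernel-verified Lean document; each statement's English description precedes it below -/
import Mathlib

section
/- Let f, β, γ ∈ B. Let ∂βx, ∂γy, ∂'x, ∂'y be K-derivations on B killing all constant letters ι(Sum.inl c) and satisfying: ∂βx(x) = β, ∂βx(y) = 0; ∂γy(y) = γ, ∂γy(x) = 0; ∂'x(x) = ∂γy(β), ∂'x(y) = 0; ∂'y(y) = ∂βx(γ), ∂'y(x) = 0. Then ∂γy(∂βx(f)) − ∂βx(∂γy(f)) = ∂'x(f) − ∂'y(f). (Proposition 2.3, second identity: the noncommutative analogue of Clairaut's theorem, ∂²f/∂_γy∂_βx − ∂²f/∂_βx∂_γy = ∂f/∂_{(∂β/∂_γy)}x − ∂f/∂_{(∂γ/∂_βx)}y.) -/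
/-!
Both sides of the identity are derivations: the commutator of two derivations is one, and so is
a difference. A derivation of a free algebra is determined by its values on the generators, and
on the generators `x` and `y` both sides give `∂β/∂_γy` and `-∂γ/∂_βx` respectively.
-/

section Leibniz

variable {R A : Type*} [CommSemiring R] [Ring A] [Algebra R A]

-- Mathlib's `Derivation` needs a commutative algebra, so derivations of `A` are Leibniz linear maps.
def IsLeibniz (D : A →ₗ[R] A) : Prop :=
  ∀ a b, D (a * b) = D a * b + a * D b

namespace IsLeibniz

theorem map_one {D : A →ₗ[R] A} (hD : IsLeibniz D) : D 1 = 0 := by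
  simpa using hD 1 1

theorem map_algebraMap {D : A →ₗ[R] A} (hD : IsLeibniz D) (r : R) :
    D (algebraMap R A r) = 0 := by
  rw [Algebra.algebraMap_eq_smul_one, map_smul, hD.map_one, smul_zero]

variable {D₁ D₂ : A →ₗ[R] A}

theorem sub (h₁ : IsLeibniz D₁) (h₂ : IsLeibniz D₂) : IsLeibniz (D₁ - D₂) := by
  intro a b
  simp only [LinearMap.sub_apply, h₁ a b, h₂ a b]
  noncomm_ring

theorem commutator (h₁ : IsLeibniz D₁) (h₂ : IsLeibniz D₂) :
    IsLeibniz (D₁ ∘ₗ D₂ - D₂ ∘ₗ D₁) := by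
  intro a b
  simp only [LinearMap.sub_apply, LinearMap.comp_apply, h₁ a b, h₂ a b, map_add, h₁ _ _, h₂ _ _]
  noncomm_ring

end IsLeibniz

end Leibniz

theorem FreeAlgebra.eq_zero_of_isLeibniz {R X : Type*} [CommRing R]
    {D : FreeAlgebra R X →ₗ[R] FreeAlgebra R X} (hD : IsLeibniz D)
    (hι : ∀ x, D (FreeAlgebra.ι R x) = 0) : D = 0 := by
  ext f
  induction f using FreeAlgebra.induction with
  | grade0 r => exact hD.map_algebraMap r
  | grade1 x => exact hι x
  | add a b ha hb => simp [ha, hb]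
  | mul a b ha hb => simp [hD a b, ha, hb]

theorem noncomm_clairaut_general
    (K : Type*) [Field K] (C : Type*)
    (f β γ : FreeAlgebra K (C ⊕ Fin 2))
    (Dβx Dγy D'x D'y : FreeAlgebra K (C ⊕ Fin 2) →ₗ[K] FreeAlgebra K (C ⊕ Fin 2))
    (hβxLeib : ∀ a b, Dβx (a * b) = Dβx a * b + a * Dβx b)
    (hγyLeib : ∀ a b, Dγy (a * b) = Dγy a * b + a * Dγy b)
    (h'xLeib : ∀ a b, D'x (a * b) = D'x a * b + a * D'x b)
    (h'yLeib : ∀ a b, D'y (a * b) = D'y a * b + a * D'y b)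
    (hβxc : ∀ c : C, Dβx (FreeAlgebra.ι K (Sum.inl c)) = 0)
    (hγyc : ∀ c : C, Dγy (FreeAlgebra.ι K (Sum.inl c)) = 0)
    (h'xc : ∀ c : C, D'x (FreeAlgebra.ι K (Sum.inl c)) = 0)
    (h'yc : ∀ c : C, D'y (FreeAlgebra.ι K (Sum.inl c)) = 0)
    (hβx_x : Dβx (FreeAlgebra.ι K (Sum.inr 0)) = β)
    (hβx_y : Dβx (FreeAlgebra.ι K (Sum.inr 1)) = 0)
    (hγy_y : Dγy (FreeAlgebra.ι K (Sum.inr 1)) = γ)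
    (hγy_x : Dγy (FreeAlgebra.ι K (Sum.inr 0)) = 0)
    (h'x_x : D'x (FreeAlgebra.ι K (Sum.inr 0)) = Dγy β)
    (h'x_y : D'x (FreeAlgebra.ι K (Sum.inr 1)) = 0)
    (h'y_y : D'y (FreeAlgebra.ι K (Sum.inr 1)) = Dβx γ)
    (h'y_x : D'y (FreeAlgebra.ι K (Sum.inr 0)) = 0) :
    Dγy (Dβx f) - Dβx (Dγy f) = D'x f - D'y f := by
  have hE : IsLeibniz ((Dγy ∘ₗ Dβx - Dβx ∘ₗ Dγy) - (D'x - D'y)) :=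
    (IsLeibniz.commutator hγyLeib hβxLeib).sub (IsLeibniz.sub h'xLeib h'yLeib)
  have hE_ι : ∀ v, ((Dγy ∘ₗ Dβx - Dβx ∘ₗ Dγy) - (D'x - D'y)) (FreeAlgebra.ι K v) = 0 := by
    rintro (c | j)
    · simp [hβxc, hγyc, h'xc, h'yc]
    · fin_cases j
      · simp [hβx_x, hγy_x, h'x_x, h'y_x]
      · simp [hβx_y, hγy_y, h'x_y, h'y_y]
  have hE_f := LinearMap.congr_fun (FreeAlgebra.eq_zero_of_isLeibniz hE hE_ι) f
  simpa [sub_eq_zero] using hE_f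

/-- Proposition 2.3, second identity: noncommutative Clairaut theorem
`∂²f/∂_γy∂_βx − ∂²f/∂_βx∂_γy = ∂f/∂_{(∂β/∂_γy)}x − ∂f/∂_{(∂γ/∂_βx)}y`. -/
theorem noncomm_clairaut
    (K : Type*) [Field K] [CharZero K] (C : Type*)
    (f β γ : FreeAlgebra K (C ⊕ Fin 2))
    (Dβx Dγy D'x D'y : FreeAlgebra K (C ⊕ Fin 2) →ₗ[K] FreeAlgebra K (C ⊕ Fin 2))
    (hβxLeib : ∀ a b, Dβx (a * b) = Dβx a * b + a * Dβx b)
    (hγyLeib : ∀ a b, Dγy (a * b) = Dγy a * b + a * Dγy b)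
    (h'xLeib : ∀ a b, D'x (a * b) = D'x a * b + a * D'x b)
    (h'yLeib : ∀ a b, D'y (a * b) = D'y a * b + a * D'y b)
    (hβxc : ∀ c : C, Dβx (FreeAlgebra.ι K (Sum.inl c)) = 0)
    (hγyc : ∀ c : C, Dγy (FreeAlgebra.ι K (Sum.inl c)) = 0)
    (h'xc : ∀ c : C, D'x (FreeAlgebra.ι K (Sum.inl c)) = 0)
    (h'yc : ∀ c : C, D'y (FreeAlgebra.ι K (Sum.inl c)) = 0)
    (hβx_x : Dβx (FreeAlgebra.ι K (Sum.inr 0)) = β)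
    (hβx_y : Dβx (FreeAlgebra.ι K (Sum.inr 1)) = 0)
    (hγy_y : Dγy (FreeAlgebra.ι K (Sum.inr 1)) = γ)
    (hγy_x : Dγy (FreeAlgebra.ι K (Sum.inr 0)) = 0)
    (h'x_x : D'x (FreeAlgebra.ι K (Sum.inr 0)) = Dγy β)
    (h'x_y : D'x (FreeAlgebra.ι K (Sum.inr 1)) = 0)
    (h'y_y : D'y (FreeAlgebra.ι K (Sum.inr 1)) = Dβx γ)
    (h'y_x : D'y (FreeAlgebra.ι K (Sum.inr 0)) = 0) :
    Dγy (Dβx f) - Dβx (Dγy f) = D'x f - D'y f :=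
  noncomm_clairaut_general K C f β γ Dβx Dγy D'x D'y hβxLeib hγyLeib h'xLeib h'yLeib hβxc hγyc h'xc
    h'yc hβx_x hβx_y hγy_y hγy_x h'x_x h'x_y h'y_y h'y_x
end

section
/- Let f, β, u, v ∈ B. Let σ : B →ₐ[K] B be the K-algebra homomorphism with σ(x) = u, σ(y) = v, and σ(ι(Sum.inl c)) = ι(Sum.inl c) for every constant letter c. Let ∂βx be a K-derivation on B with ∂βx(x) = β, ∂βx(y) = 0, and ∂βx(ι(Sum.inl c)) = 0 for all constants c. Let Δ₁, Δ₂ : B → B be K-linear maps satisfying the σ-twisted Leibniz rule Δᵢ(ab) = Δᵢ(a)·σ(b) + σ(a)·Δᵢ(b) for all a, b ∈ B, with Δ₁(x) = ∂βx(u), Δ₁(y) = 0, Δ₂(x) = 0, Δ₂(y) = ∂βx(v), and Δᵢ(ι(Sum.inl c)) = 0 for all constants c. Then ∂βx(σ(f)) = Δ₁(f) + Δ₂(f). (Proposition 2.3, first identity: the noncommutative multi-variable chain rule ∂(f(u,v))/∂_βx = ∂(f(u,v))/∂_{(∂u/∂_βx)}u + ∂(f(u,v))/∂_{(∂v/∂_βx)}v.)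 -/
/-!
Both sides of the chain rule are `σ`-twisted derivations of the free algebra: the right-hand side
as a sum of two of them, the left-hand side because a derivation precomposed with an algebra
map `σ` satisfies `D (σ (a * b)) = D (σ a) * σ b + σ a * D (σ b)`. A twisted derivation of a free
algebra is determined by its values on the generators, and on `x`, `y` and the constants the two
sides visibly agree.
-/

def IsTwistedDerivation {R A B : Type*} [CommSemiring R] [Semiring A] [Semiring B]
    [Algebra R A] [Algebra R B] (σ : A →ₐ[R] B) (Δ : A →ₗ[R] B) : Prop :=
  ∀ a b, Δ (a * b) = Δ a * σ b + σ a * Δ b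

namespace IsTwistedDerivation

variable {R A B : Type*} [CommSemiring R] [Semiring A] [Algebra R A]

section Semiring

variable [Semiring B] [Algebra R B] {σ : A →ₐ[R] B} {Δ Δ' : A →ₗ[R] B}

theorem add (h : IsTwistedDerivation σ Δ) (h' : IsTwistedDerivation σ Δ') :
    IsTwistedDerivation σ (Δ + Δ') := by
  intro a b
  simp only [LinearMap.add_apply, h a b, h' a b, mul_add, add_mul]
  abel

theorem derivation_comp {D : B →ₗ[R] B} (hD : ∀ a b, D (a * b) = D a * b + a * D b) :
    IsTwistedDerivation σ (D ∘ₗ σ.toLinearMap) := by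
  intro a b
  simp [hD]

end Semiring

variable [Ring B] [Algebra R B] {σ : A →ₐ[R] B} {Δ : A →ₗ[R] B}

theorem map_one (h : IsTwistedDerivation σ Δ) : Δ 1 = 0 := by
  simpa using h 1 1

theorem map_algebraMap (h : IsTwistedDerivation σ Δ) (r : R) : Δ (algebraMap R A r) = 0 := by
  rw [Algebra.algebraMap_eq_smul_one, map_smul, h.map_one, smul_zero]

theorem ext_freeAlgebra {X : Type*} {σ : FreeAlgebra R X →ₐ[R] B} {Δ Δ' : FreeAlgebra R X →ₗ[R] B}
    (h : IsTwistedDerivation σ Δ) (h' : IsTwistedDerivation σ Δ')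
    (hι : ∀ x, Δ (FreeAlgebra.ι R x) = Δ' (FreeAlgebra.ι R x)) : Δ = Δ' := by
  ext f
  induction f using FreeAlgebra.induction with
  | grade0 r => rw [h.map_algebraMap, h'.map_algebraMap]
  | grade1 x => exact hι x
  | mul a b ha hb => rw [h, h', ha, hb]
  | add a b ha hb => rw [map_add, map_add, ha, hb]

end IsTwistedDerivation

theorem noncomm_chain_rule_general
    (K : Type*) [Field K] (C : Type*)
    (f u v : FreeAlgebra K (C ⊕ Fin 2))
    (σ : FreeAlgebra K (C ⊕ Fin 2) →ₐ[K] FreeAlgebra K (C ⊕ Fin 2))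
    (hσx : σ (FreeAlgebra.ι K (Sum.inr 0)) = u)
    (hσy : σ (FreeAlgebra.ι K (Sum.inr 1)) = v)
    (hσc : ∀ c : C, σ (FreeAlgebra.ι K (Sum.inl c)) = FreeAlgebra.ι K (Sum.inl c))
    (Dβx : FreeAlgebra K (C ⊕ Fin 2) →ₗ[K] FreeAlgebra K (C ⊕ Fin 2))
    (hβxLeib : ∀ a b, Dβx (a * b) = Dβx a * b + a * Dβx b)
    (hβxc : ∀ c : C, Dβx (FreeAlgebra.ι K (Sum.inl c)) = 0)
    (Δ₁ Δ₂ : FreeAlgebra K (C ⊕ Fin 2) →ₗ[K] FreeAlgebra K (C ⊕ Fin 2))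
    (hΔ₁Leib : ∀ a b, Δ₁ (a * b) = Δ₁ a * σ b + σ a * Δ₁ b)
    (hΔ₂Leib : ∀ a b, Δ₂ (a * b) = Δ₂ a * σ b + σ a * Δ₂ b)
    (hΔ₁x : Δ₁ (FreeAlgebra.ι K (Sum.inr 0)) = Dβx u)
    (hΔ₁y : Δ₁ (FreeAlgebra.ι K (Sum.inr 1)) = 0)
    (hΔ₂x : Δ₂ (FreeAlgebra.ι K (Sum.inr 0)) = 0)
    (hΔ₂y : Δ₂ (FreeAlgebra.ι K (Sum.inr 1)) = Dβx v)
    (hΔ₁c : ∀ c : C, Δ₁ (FreeAlgebra.ι K (Sum.inl c)) = 0)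
    (hΔ₂c : ∀ c : C, Δ₂ (FreeAlgebra.ι K (Sum.inl c)) = 0) :
    Dβx (σ f) = Δ₁ f + Δ₂ f := by
  have key : Dβx ∘ₗ σ.toLinearMap = Δ₁ + Δ₂ := by
    refine (IsTwistedDerivation.derivation_comp hβxLeib).ext_freeAlgebra
      (IsTwistedDerivation.add hΔ₁Leib hΔ₂Leib) ?_
    rintro (c | i)
    · simp [hσc, hβxc, hΔ₁c, hΔ₂c]
    · fin_cases i
      · simp [hσx, hΔ₁x, hΔ₂x]
      · simp [hσy, hΔ₁y, hΔ₂y]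
  exact LinearMap.congr_fun key f

/-- Proposition 2.3, first identity: the noncommutative multi-variable chain rule
`∂(f(u,v))/∂_βx = ∂(f(u,v))/∂_{(∂u/∂_βx)}u + ∂(f(u,v))/∂_{(∂v/∂_βx)}v`. -/
theorem noncomm_chain_rule
    (K : Type*) [Field K] [CharZero K] (C : Type*)
    (f β u v : FreeAlgebra K (C ⊕ Fin 2))
    (σ : FreeAlgebra K (C ⊕ Fin 2) →ₐ[K] FreeAlgebra K (C ⊕ Fin 2))
    (hσx : σ (FreeAlgebra.ι K (Sum.inr 0)) = u)
    (hσy : σ (FreeAlgebra.ι K (Sum.inr 1)) = v)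
    (hσc : ∀ c : C, σ (FreeAlgebra.ι K (Sum.inl c)) = FreeAlgebra.ι K (Sum.inl c))
    (Dβx : FreeAlgebra K (C ⊕ Fin 2) →ₗ[K] FreeAlgebra K (C ⊕ Fin 2))
    (hβxLeib : ∀ a b, Dβx (a * b) = Dβx a * b + a * Dβx b)
    (hβx_x : Dβx (FreeAlgebra.ι K (Sum.inr 0)) = β)
    (hβx_y : Dβx (FreeAlgebra.ι K (Sum.inr 1)) = 0)
    (hβxc : ∀ c : C, Dβx (FreeAlgebra.ι K (Sum.inl c)) = 0)
    (Δ₁ Δ₂ : FreeAlgebra K (C ⊕ Fin 2) →ₗ[K] FreeAlgebra K (C ⊕ Fin 2))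
    (hΔ₁Leib : ∀ a b, Δ₁ (a * b) = Δ₁ a * σ b + σ a * Δ₁ b)
    (hΔ₂Leib : ∀ a b, Δ₂ (a * b) = Δ₂ a * σ b + σ a * Δ₂ b)
    (hΔ₁x : Δ₁ (FreeAlgebra.ι K (Sum.inr 0)) = Dβx u)
    (hΔ₁y : Δ₁ (FreeAlgebra.ι K (Sum.inr 1)) = 0)
    (hΔ₂x : Δ₂ (FreeAlgebra.ι K (Sum.inr 0)) = 0)
    (hΔ₂y : Δ₂ (FreeAlgebra.ι K (Sum.inr 1)) = Dβx v)
    (hΔ₁c : ∀ c : C, Δ₁ (FreeAlgebra.ι K (Sum.inl c)) = 0)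
    (hΔ₂c : ∀ c : C, Δ₂ (FreeAlgebra.ι K (Sum.inl c)) = 0) :
    Dβx (σ f) = Δ₁ f + Δ₂ f :=
  noncomm_chain_rule_general K C f u v σ hσx hσy hσc Dβx hβxLeib hβxc Δ₁ Δ₂ hΔ₁Leib hΔ₂Leib hΔ₁x
    hΔ₁y hΔ₂x hΔ₂y hΔ₁c hΔ₂c
end
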